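/- arXiv:solv-int/9902003 — 3 statements merged into one kernel-verified Lean document; each statement's English description precedes it below -/
import Mathlib

section
/- For every ε ∈ ℝ and j ∈ {1,2}, the Miura map M_j(ε) : ℳ𝒯 → 𝒯 is a Poisson map in two ways: (i) from ℳ𝒯 equipped with the bracket {·,·}_{12} to 𝒯 equipped with the bracket {·,·}_1 + ε{·,·}_2, i.e. DM_j(x)·J_{12}(x)·DM_j(x)ᵀ = (J_1 + εJ_2)(M_j(x)) for all x; and (ii) from ℳ𝒯 equipped with the bracket {·,·}_{23} to 𝒯 equipped with the bracket {·,·}_2 + ε{·,·}_3, i.e. DM_j(x)·J_{23}(x)·DM_j(x)ᵀ = (J_2 + εJ_3)(M_j(x)) for all x. -/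
open scoped BigOperators

/-- Index set for the periodic phase space `ℝ^{2N}`: `Sum.inl k` indexes the first
family of coordinates and `Sum.inr k` the second family, `k ∈ ℤ/Nℤ`. -/
abbrev Idx (N : ℕ) : Type := (ZMod N) ⊕ (ZMod N)

/-- The phase space `ℝ^{2N}`. -/
abbrev Phase (N : ℕ) : Type := Idx N → ℝ

/-- First family of coordinates. -/
def c1 {N : ℕ} (x : Phase N) (k : ZMod N) : ℝ := x (Sum.inl k)

/-- Second family of coordinates. -/
def c2 {N : ℕ} (x : Phase N) (k : ZMod N) : ℝ := x (Sum.inr k)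

/-- A structure matrix on `Phase N`. -/
abbrev SM (N : ℕ) : Type := Phase N → Idx N → Idx N → ℝ

/-- Partial derivative of `F` at `x` in the `i`-th coordinate direction. -/
noncomputable def pderiv {N : ℕ} [NeZero N] (i : Idx N) (F : Phase N → ℝ)
    (x : Phase N) : ℝ :=
  fderiv ℝ F x (Pi.single i 1)

/-- The bracket of two functions associated with a structure matrix `J`:
`{F,G}(x) = ∑_{i,j} ∂_i F(x) · J_{ij}(x) · ∂_j G(x)`. -/
noncomputable def bracket {N : ℕ} [NeZero N] (J : SM N) (F G : Phase N → ℝ)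
    (x : Phase N) : ℝ :=
  ∑ i : Idx N, ∑ j : Idx N, pderiv i F x * J x i j * pderiv j G x

/-- The Jacobi identity for `J` holds at every point satisfying `P`. -/
def JacobiOn {N : ℕ} [NeZero N] (J : SM N) (P : Phase N → Prop) : Prop :=
  ∀ F G H : Phase N → ℝ, ContDiff ℝ (⊤ : ℕ∞) F → ContDiff ℝ (⊤ : ℕ∞) G →
    ContDiff ℝ (⊤ : ℕ∞) H → ∀ x : Phase N, P x →
      bracket J (bracket J F G) H x + bracket J (bracket J G H) F x +
        bracket J (bracket J H F) G x = 0

/-- `J` defines a Poisson bracket: the Jacobi identity holds everywhere. -/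
def IsPoisson {N : ℕ} [NeZero N] (J : SM N) : Prop :=
  JacobiOn J fun _ => True

/-- `f(x) = J(x)∇H(x)`: the vector field `f` is Hamiltonian at `x` with respect
to the structure matrix `J`, with Hamilton function `H`. -/
def HamAt {N : ℕ} [NeZero N] (J : SM N) (f : Phase N → Phase N)
    (H : Phase N → ℝ) (x : Phase N) : Prop :=
  ∀ i : Idx N, f x i = ∑ j : Idx N, J x i j * pderiv j H x

/-- `Dφ(x)·J(x)·Dφ(x)ᵀ = J'(φ(x))`: `φ` is a Poisson map at `x` from the
structure matrix `J` to the structure matrix `J'`. -/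
def PoissonMapAt {N : ℕ} [NeZero N] (φ : Phase N → Phase N) (J J' : SM N)
    (x : Phase N) : Prop :=
  ∀ i j : Idx N,
    (∑ k : Idx N, ∑ l : Idx N,
      pderiv k (fun y => φ y i) x * J x k l * pderiv l (fun y => φ y j) x)
      = J' (φ x) i j

/-- `Dφ(x)·f(x) = g(φ(x))`: the vector field `f` is the pull-back of the vector
field `g` under `φ`, at the point `x`. -/
def PullbackAt {N : ℕ} [NeZero N] (φ : Phase N → Phase N)
    (f g : Phase N → Phase N) (x : Phase N) : Prop :=
  ∀ i : Idx N, (∑ k : Idx N, pderiv k (fun y => φ y i) x * f x k) = g (φ x) i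

/-- Linear Toda structure matrix `J₁`: `{b_k,a_k} = -a_k`, `{a_k,b_{k+1}} = -a_k`,
with coordinates `b_k = c1 x k`, `a_k = c2 x k`. -/
noncomputable def JT1 {N : ℕ} (x : Phase N) : Idx N → Idx N → ℝ := fun i₁ i₂ =>
  match i₁, i₂ with
  | Sum.inl j, Sum.inr k =>
      if j = k then -c2 x k else if j = k + 1 then c2 x k else 0
  | Sum.inr k, Sum.inl j =>
      if j = k then c2 x k else if j = k + 1 then -c2 x k else 0
  | _, _ => 0

/-- Quadratic Toda structure matrix `J₂`: `{b_k,a_k} = -b_k a_k`,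
`{a_k,b_{k+1}} = -a_k b_{k+1}`, `{b_k,b_{k+1}} = -a_k`, `{a_k,a_{k+1}} = -a_k a_{k+1}`. -/
noncomputable def JT2 {N : ℕ} (x : Phase N) : Idx N → Idx N → ℝ := fun i₁ i₂ =>
  match i₁, i₂ with
  | Sum.inl j, Sum.inr k =>
      if j = k then -(c1 x k * c2 x k)
      else if j = k + 1 then c2 x k * c1 x (k + 1) else 0
  | Sum.inr k, Sum.inl j =>
      if j = k then c1 x k * c2 x k
      else if j = k + 1 then -(c2 x k * c1 x (k + 1)) else 0
  | Sum.inl j, Sum.inl l =>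
      if l = j + 1 then -c2 x j else if j = l + 1 then c2 x l else 0
  | Sum.inr j, Sum.inr l =>
      if l = j + 1 then -(c2 x j * c2 x (j + 1))
      else if j = l + 1 then c2 x l * c2 x (l + 1) else 0

/-- Cubic Toda structure matrix `J₃`. -/
noncomputable def JT3 {N : ℕ} (x : Phase N) : Idx N → Idx N → ℝ := fun i₁ i₂ =>
  match i₁, i₂ with
  | Sum.inl j, Sum.inr k =>
      if j = k then -(c2 x k * ((c1 x k) ^ 2 + c2 x k))
      else if j = k + 1 then c2 x k * ((c1 x (k + 1)) ^ 2 + c2 x k)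
      else if k = j + 1 then -(c2 x j * c2 x k)
      else if j = k + 2 then c2 x k * c2 x (k + 1)
      else 0
  | Sum.inr k, Sum.inl j =>
      if j = k then c2 x k * ((c1 x k) ^ 2 + c2 x k)
      else if j = k + 1 then -(c2 x k * ((c1 x (k + 1)) ^ 2 + c2 x k))
      else if k = j + 1 then c2 x j * c2 x k
      else if j = k + 2 then -(c2 x k * c2 x (k + 1))
      else 0
  | Sum.inl j, Sum.inl l =>
      if l = j + 1 then -(c2 x j * (c1 x j + c1 x (j + 1)))
      else if j = l + 1 then c2 x l * (c1 x l + c1 x (l + 1)) else 0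
  | Sum.inr j, Sum.inr l =>
      if l = j + 1 then -(2 * c2 x j * c2 x (j + 1) * c1 x (j + 1))
      else if j = l + 1 then 2 * c2 x l * c2 x (l + 1) * c1 x (l + 1) else 0

/-- Structure matrix `J₁₂` on `ℳ𝒯`: `{p_k,q_k} = -q_k(1+εp_k)`,
`{q_k,p_{k+1}} = -q_k(1+εp_{k+1})`. -/
noncomputable def JMT12 (ε : ℝ) {N : ℕ} (x : Phase N) : Idx N → Idx N → ℝ := fun i₁ i₂ =>
  match i₁, i₂ with
  | Sum.inl j, Sum.inr k =>
      if j = k then -(c2 x k * (1 + ε * c1 x k))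
      else if j = k + 1 then c2 x k * (1 + ε * c1 x (k + 1)) else 0
  | Sum.inr k, Sum.inl j =>
      if j = k then c2 x k * (1 + ε * c1 x k)
      else if j = k + 1 then -(c2 x k * (1 + ε * c1 x (k + 1))) else 0
  | _, _ => 0

/-- Structure matrix `J₂₃` on `ℳ𝒯`. -/
noncomputable def JMT23 (ε : ℝ) {N : ℕ} (x : Phase N) : Idx N → Idx N → ℝ := fun i₁ i₂ =>
  match i₁, i₂ with
  | Sum.inl j, Sum.inr k =>
      if j = k then -(c2 x k * (c1 x k + ε * c2 x k) * (1 + ε * c1 x k))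
      else if j = k + 1 then
        c2 x k * (c1 x (k + 1) + ε * c2 x k) * (1 + ε * c1 x (k + 1))
      else 0
  | Sum.inr k, Sum.inl j =>
      if j = k then c2 x k * (c1 x k + ε * c2 x k) * (1 + ε * c1 x k)
      else if j = k + 1 then
        -(c2 x k * (c1 x (k + 1) + ε * c2 x k) * (1 + ε * c1 x (k + 1)))
      else 0
  | Sum.inl j, Sum.inl l =>
      if l = j + 1 then -(c2 x j * (1 + ε * c1 x j) * (1 + ε * c1 x (j + 1)))
      else if j = l + 1 then c2 x l * (1 + ε * c1 x l) * (1 + ε * c1 x (l + 1))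
      else 0
  | Sum.inr j, Sum.inr l =>
      if l = j + 1 then -(c2 x j * c2 x (j + 1) * (1 + ε * c1 x (j + 1)))
      else if j = l + 1 then c2 x l * c2 x (l + 1) * (1 + ε * c1 x (l + 1))
      else 0

/-- Miura map `M₁(ε) : ℳ𝒯 → 𝒯`: `b_k = p_k + εq_{k-1}`, `a_k = q_k(1 + εp_k)`. -/
noncomputable def miuraMT1 (ε : ℝ) {N : ℕ} (x : Phase N) : Phase N := fun i =>
  match i with
  | Sum.inl k => c1 x k + ε * c2 x (k - 1)
  | Sum.inr k => c2 x k * (1 + ε * c1 x k)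

/-- Miura map `M₂(ε) : ℳ𝒯 → 𝒯`: `b_k = p_k + εq_k`, `a_k = q_k(1 + εp_{k+1})`. -/
noncomputable def miuraMT2 (ε : ℝ) {N : ℕ} (x : Phase N) : Phase N := fun i =>
  match i with
  | Sum.inl k => c1 x k + ε * c2 x k
  | Sum.inr k => c2 x k * (1 + ε * c1 x (k + 1))

set_option linter.unusedSectionVars false
section Aux
variable {N : ℕ} [NeZero N]

noncomputable def pr (i : Idx N) : Phase N →L[ℝ] ℝ :=
  ContinuousLinearMap.proj (R := ℝ) (φ := fun _ : Idx N => ℝ) i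

lemma hasFDerivAt_coord (i : Idx N) (x : Phase N) :
    HasFDerivAt (fun y : Phase N => y i) (pr i) x :=
  (pr i).hasFDerivAt

lemma pderiv_of_hasFDerivAt {F : Phase N → ℝ} {L : Phase N →L[ℝ] ℝ} {x : Phase N}
    (h : HasFDerivAt F L x) (i : Idx N) : pderiv i F x = L (Pi.single i 1) := by
  rw [pderiv, h.fderiv]

lemma pr_single (i k : Idx N) : pr i (Pi.single k 1) = if i = k then (1:ℝ) else 0 := by
  simp [pr, Pi.single_apply]

lemma collapse (J : SM N) (x : Phase N) (f g : Idx N → ℝ)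
    (s1 s2 t1 t2 : Idx N) (a1 a2 b1 b2 : ℝ)
    (hf : ∀ k, f k = (if s1 = k then a1 else 0) + (if s2 = k then a2 else 0))
    (hg : ∀ l, g l = (if t1 = l then b1 else 0) + (if t2 = l then b2 else 0)) :
    ∑ k : Idx N, ∑ l : Idx N, f k * J x k l * g l
      = a1 * J x s1 t1 * b1 + a1 * J x s1 t2 * b2
        + a2 * J x s2 t1 * b1 + a2 * J x s2 t2 * b2 := by
  simp only [hf, hg, add_mul, mul_add, ite_mul, mul_ite, zero_mul, mul_zero,
    zero_add, add_zero, Finset.sum_add_distrib, Finset.sum_ite_eq, Finset.mem_univ,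
    if_true]
  ring
end Aux
section Aux2
variable {N : ℕ} [NeZero N]

def m1s1 : Idx N → Idx N | .inl m => .inl m | .inr m => .inl m
def m1s2 : Idx N → Idx N | .inl m => .inr (m-1) | .inr m => .inr m
noncomputable def m1a1 (ε : ℝ) (x : Phase N) : Idx N → ℝ
  | .inl _ => 1 | .inr m => ε * c2 x m
noncomputable def m1a2 (ε : ℝ) (x : Phase N) : Idx N → ℝ
  | .inl _ => ε | .inr m => 1 + ε * c1 x m

def m2s1 : Idx N → Idx N | .inl m => .inl m | .inr m => .inl (m+1)
def m2s2 : Idx N → Idx N | .inl m => .inr m | .inr m => .inr m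
noncomputable def m2a1 (ε : ℝ) (x : Phase N) : Idx N → ℝ
  | .inl _ => 1 | .inr m => ε * c2 x m
noncomputable def m2a2 (ε : ℝ) (x : Phase N) : Idx N → ℝ
  | .inl _ => ε | .inr m => 1 + ε * c1 x (m+1)

lemma dM1 (ε : ℝ) (x : Phase N) (i k : Idx N) :
    pderiv k (fun y => miuraMT1 ε y i) x
      = (if m1s1 i = k then m1a1 ε x i else 0)
        + (if m1s2 i = k then m1a2 ε x i else 0) := by
  rcases i with m | m
  · have h : HasFDerivAt (fun y : Phase N => miuraMT1 ε y (Sum.inl m))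
        (pr (Sum.inl m) + ε • pr (Sum.inr (m-1))) x := by
      have := (hasFDerivAt_coord (Sum.inl m) x).add
        ((hasFDerivAt_coord (Sum.inr (m-1)) x).const_mul ε)
      exact this
    show _ = (if Sum.inl m = k then _ else 0) + (if Sum.inr (m-1) = k then _ else 0)
    rw [pderiv_of_hasFDerivAt h]
    simp [pr_single, m1s1, m1s2, m1a1, m1a2, mul_ite]
  · have h : HasFDerivAt (fun y : Phase N => miuraMT1 ε y (Sum.inr m))
        ((x (Sum.inr m)) • ((0 : Phase N →L[ℝ] ℝ) + ε • pr (Sum.inl m))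
          + (1 + ε * x (Sum.inl m)) • pr (Sum.inr m)) x := by
      have := (hasFDerivAt_coord (Sum.inr m) x).mul
        ((hasFDerivAt_const (1:ℝ) x).add ((hasFDerivAt_coord (Sum.inl m) x).const_mul ε))
      exact this
    show _ = (if Sum.inl m = k then _ else 0) + (if Sum.inr m = k then _ else 0)
    rw [pderiv_of_hasFDerivAt h]
    simp only [ContinuousLinearMap.add_apply, ContinuousLinearMap.smul_apply,
      ContinuousLinearMap.zero_apply, pr_single, m1s1, m1s2, m1a1, m1a2, c1, c2,
      smul_eq_mul]
    split_ifs <;> ring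
end Aux2
section Aux3
variable {N : ℕ} [NeZero N]

lemma dM2 (ε : ℝ) (x : Phase N) (i k : Idx N) :
    pderiv k (fun y => miuraMT2 ε y i) x
      = (if m2s1 i = k then m2a1 ε x i else 0)
        + (if m2s2 i = k then m2a2 ε x i else 0) := by
  rcases i with m | m
  · have h : HasFDerivAt (fun y : Phase N => miuraMT2 ε y (Sum.inl m))
        (pr (Sum.inl m) + ε • pr (Sum.inr m)) x := by
      have := (hasFDerivAt_coord (Sum.inl m) x).add
        ((hasFDerivAt_coord (Sum.inr m) x).const_mul ε)
      exact this
    show _ = (if Sum.inl m = k then _ else 0) + (if Sum.inr m = k then _ else 0)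
    rw [pderiv_of_hasFDerivAt h]
    simp [pr_single, m2s1, m2s2, m2a1, m2a2, mul_ite]
  · have h : HasFDerivAt (fun y : Phase N => miuraMT2 ε y (Sum.inr m))
        ((x (Sum.inr m)) • ((0 : Phase N →L[ℝ] ℝ) + ε • pr (Sum.inl (m+1)))
          + (1 + ε * x (Sum.inl (m+1))) • pr (Sum.inr m)) x := by
      have := (hasFDerivAt_coord (Sum.inr m) x).mul
        ((hasFDerivAt_const (1:ℝ) x).add ((hasFDerivAt_coord (Sum.inl (m+1)) x).const_mul ε))
      exact this
    show _ = (if Sum.inl (m+1) = k then _ else 0) + (if Sum.inr m = k then _ else 0)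
    rw [pderiv_of_hasFDerivAt h]
    simp only [ContinuousLinearMap.add_apply, ContinuousLinearMap.smul_apply,
      ContinuousLinearMap.zero_apply, pr_single, m2s1, m2s2, m2a1, m2a2, c1, c2,
      smul_eq_mul]
    split_ifs <;> first | ring | simp_all
end Aux3

set_option maxHeartbeats 1600000 in
/-- both Miura maps `M₁(ε), M₂(ε) : ℳ𝒯 → 𝒯` are Poisson from
`{·,·}₁₂` to `{·,·}₁ + ε{·,·}₂` and from `{·,·}₂₃` to `{·,·}₂ + ε{·,·}₃`. -/
theorem stmt5 (N : ℕ) [NeZero N] (hN : 5 ≤ N) (ε : ℝ) :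
    (∀ x : Phase N, PoissonMapAt (miuraMT1 ε) (JMT12 ε)
      (fun y i j => JT1 y i j + ε * JT2 y i j) x) ∧
    (∀ x : Phase N, PoissonMapAt (miuraMT2 ε) (JMT12 ε)
      (fun y i j => JT1 y i j + ε * JT2 y i j) x) ∧
    (∀ x : Phase N, PoissonMapAt (miuraMT1 ε) (JMT23 ε)
      (fun y i j => JT2 y i j + ε * JT3 y i j) x) ∧
    (∀ x : Phase N, PoissonMapAt (miuraMT2 ε) (JMT23 ε)
      (fun y i j => JT2 y i j + ε * JT3 y i j) x) := by
  haveI : Fact (1 < N) := ⟨by omega⟩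
  have f1 : (1 : ZMod N) ≠ 0 := one_ne_zero
  have fnat : ∀ a : ℕ, 0 < a → a < 5 → ((a : ℕ) : ZMod N) ≠ 0 := by
    intro a h1 h2 h
    rw [ZMod.natCast_eq_zero_iff] at h
    have := Nat.le_of_dvd h1 h
    omega
  have f2 : (2 : ZMod N) ≠ 0 := by have := fnat 2 (by norm_num) (by norm_num); simpa using this
  have f3 : (3 : ZMod N) ≠ 0 := by have := fnat 3 (by norm_num) (by norm_num); simpa using this
  have f4 : (4 : ZMod N) ≠ 0 := by have := fnat 4 (by norm_num) (by norm_num); simpa using this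
  have f12 : (1 : ZMod N) ≠ 2 := fun h => f1 (by linear_combination -h)
  have f21 : (2 : ZMod N) ≠ 1 := fun h => f1 (by linear_combination h)
  have f13 : (1 : ZMod N) ≠ 3 := fun h => f2 (by linear_combination -h)
  have f31 : (3 : ZMod N) ≠ 1 := fun h => f2 (by linear_combination h)
  have f23 : (2 : ZMod N) ≠ 3 := fun h => f1 (by linear_combination -h)
  have f32 : (3 : ZMod N) ≠ 2 := fun h => f1 (by linear_combination h)
  have f14 : (1 : ZMod N) ≠ 4 := fun h => f3 (by linear_combination -h)
  have f41 : (4 : ZMod N) ≠ 1 := fun h => f3 (by linear_combination h)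
  have f24 : (2 : ZMod N) ≠ 4 := fun h => f2 (by linear_combination -h)
  have f42 : (4 : ZMod N) ≠ 2 := fun h => f2 (by linear_combination h)
  have f34 : (3 : ZMod N) ≠ 4 := fun h => f1 (by linear_combination -h)
  have f43 : (4 : ZMod N) ≠ 3 := fun h => f1 (by linear_combination h)
  have nrm : ∀ a : ZMod N, a + 1 + 1 = a + 2 := fun a => by ring
  have nrm2 : ∀ a : ZMod N, a + 2 + 1 = a + 3 := fun a => by ring
  have nrm3 : ∀ a : ZMod N, a + 3 + 1 = a + 4 := fun a => by ring
  have nrm4 : ∀ a : ZMod N, a + 2 + 2 = a + 4 := fun a => by ring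
  have nrm5 : ∀ a : ZMod N, a + 1 + 2 = a + 3 := fun a => by ring
  refine ⟨?_, ?_, ?_, ?_⟩
  · intro x i j
    refine ((collapse (JMT12 ε) x _ _ _ _ _ _ _ _ _ _
      (fun k => dM1 ε x i k) (fun l => dM1 ε x j l)).trans ?_)
    rcases i with m | m <;> rcases j with n | n <;>
      simp only [m1s1, m1s2, m1a1, m1a2, JMT12, JT1, JT2, miuraMT1, c1, c2] <;>
      (by_cases e0 : n = m
       · subst e0; simp only [sub_add_cancel, add_sub_cancel_right, eq_sub_iff_add_eq, sub_eq_iff_eq_add, left_eq_add, add_eq_left, right_eq_add, add_eq_right, add_right_inj, add_left_inj, nrm, nrm2, nrm3, nrm4, nrm5, f1, f2, f3, f4, f12, f21, f13, f31, f23, f32, f14, f41, f24, f42, f34, f43, if_true, if_false, eq_self_iff_true, mul_zero, zero_mul, add_zero, zero_add, mul_one, one_mul, not_true, not_false_iff]; try ring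
       · by_cases e1 : n = m + 1
         · subst e1; simp only [sub_add_cancel, add_sub_cancel_right, eq_sub_iff_add_eq, sub_eq_iff_eq_add, left_eq_add, add_eq_left, right_eq_add, add_eq_right, add_right_inj, add_left_inj, nrm, nrm2, nrm3, nrm4, nrm5, f1, f2, f3, f4, f12, f21, f13, f31, f23, f32, f14, f41, f24, f42, f34, f43, if_true, if_false, eq_self_iff_true, mul_zero, zero_mul, add_zero, zero_add, mul_one, one_mul, not_true, not_false_iff]; try ring
         · by_cases e2 : m = n + 1
           · subst e2; simp only [sub_add_cancel, add_sub_cancel_right, eq_sub_iff_add_eq, sub_eq_iff_eq_add, left_eq_add, add_eq_left, right_eq_add, add_eq_right, add_right_inj, add_left_inj, nrm, nrm2, nrm3, nrm4, nrm5, f1, f2, f3, f4, f12, f21, f13, f31, f23, f32, f14, f41, f24, f42, f34, f43, if_true, if_false, eq_self_iff_true, mul_zero, zero_mul, add_zero, zero_add, mul_one, one_mul, not_true, not_false_iff]; try ring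
           · by_cases e3 : n = m + 2
             · subst e3; simp only [sub_add_cancel, add_sub_cancel_right, eq_sub_iff_add_eq, sub_eq_iff_eq_add, left_eq_add, add_eq_left, right_eq_add, add_eq_right, add_right_inj, add_left_inj, nrm, nrm2, nrm3, nrm4, nrm5, f1, f2, f3, f4, f12, f21, f13, f31, f23, f32, f14, f41, f24, f42, f34, f43, if_true, if_false, eq_self_iff_true, mul_zero, zero_mul, add_zero, zero_add, mul_one, one_mul, not_true, not_false_iff]; try ring
             · by_cases e4 : m = n + 2
               · subst e4; simp only [sub_add_cancel, add_sub_cancel_right, eq_sub_iff_add_eq, sub_eq_iff_eq_add, left_eq_add, add_eq_left, right_eq_add, add_eq_right, add_right_inj, add_left_inj, nrm, nrm2, nrm3, nrm4, nrm5, f1, f2, f3, f4, f12, f21, f13, f31, f23, f32, f14, f41, f24, f42, f34, f43, if_true, if_false, eq_self_iff_true, mul_zero, zero_mul, add_zero, zero_add, mul_one, one_mul, not_true, not_false_iff]; try ring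
               · have d1 : ¬(n + 1 = m + 2) := fun h => e1 (by linear_combination h)
                 have d2 : ¬(m + 1 = n + 2) := fun h => e2 (by linear_combination h)
                 simp only [sub_add_cancel, add_sub_cancel_right, eq_sub_iff_add_eq, sub_eq_iff_eq_add, left_eq_add, add_eq_left, right_eq_add, add_eq_right, add_right_inj, add_left_inj, nrm, nrm2, nrm3, nrm4, nrm5, f1, f2, f3, f4, f12, f21, f13, f31, f23, f32, f14, f41, f24, f42, f34, f43, if_true, if_false, eq_self_iff_true, mul_zero, zero_mul, add_zero, zero_add, mul_one, one_mul, not_true, not_false_iff, e0, e1, e2, e3, e4, Ne.symm e0, Ne.symm e1, Ne.symm e2, Ne.symm e3, Ne.symm e4, d1, d2, Ne.symm d1, Ne.symm d2]; try ring)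
  · intro x i j
    refine ((collapse (JMT12 ε) x _ _ _ _ _ _ _ _ _ _
      (fun k => dM2 ε x i k) (fun l => dM2 ε x j l)).trans ?_)
    rcases i with m | m <;> rcases j with n | n <;>
      simp only [m2s1, m2s2, m2a1, m2a2, JMT12, JT1, JT2, miuraMT2, c1, c2] <;>
      (by_cases e0 : n = m
       · subst e0; simp only [sub_add_cancel, add_sub_cancel_right, eq_sub_iff_add_eq, sub_eq_iff_eq_add, left_eq_add, add_eq_left, right_eq_add, add_eq_right, add_right_inj, add_left_inj, nrm, nrm2, nrm3, nrm4, nrm5, f1, f2, f3, f4, f12, f21, f13, f31, f23, f32, f14, f41, f24, f42, f34, f43, if_true, if_false, eq_self_iff_true, mul_zero, zero_mul, add_zero, zero_add, mul_one, one_mul, not_true, not_false_iff]; try ring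
       · by_cases e1 : n = m + 1
         · subst e1; simp only [sub_add_cancel, add_sub_cancel_right, eq_sub_iff_add_eq, sub_eq_iff_eq_add, left_eq_add, add_eq_left, right_eq_add, add_eq_right, add_right_inj, add_left_inj, nrm, nrm2, nrm3, nrm4, nrm5, f1, f2, f3, f4, f12, f21, f13, f31, f23, f32, f14, f41, f24, f42, f34, f43, if_true, if_false, eq_self_iff_true, mul_zero, zero_mul, add_zero, zero_add, mul_one, one_mul, not_true, not_false_iff]; try ring
         · by_cases e2 : m = n + 1
           · subst e2; simp only [sub_add_cancel, add_sub_cancel_right, eq_sub_iff_add_eq, sub_eq_iff_eq_add, left_eq_add, add_eq_left, right_eq_add, add_eq_right, add_right_inj, add_left_inj, nrm, nrm2, nrm3, nrm4, nrm5, f1, f2, f3, f4, f12, f21, f13, f31, f23, f32, f14, f41, f24, f42, f34, f43, if_true, if_false, eq_self_iff_true, mul_zero, zero_mul, add_zero, zero_add, mul_one, one_mul, not_true, not_false_iff]; try ring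
           · by_cases e3 : n = m + 2
             · subst e3; simp only [sub_add_cancel, add_sub_cancel_right, eq_sub_iff_add_eq, sub_eq_iff_eq_add, left_eq_add, add_eq_left, right_eq_add, add_eq_right, add_right_inj, add_left_inj, nrm, nrm2, nrm3, nrm4, nrm5, f1, f2, f3, f4, f12, f21, f13, f31, f23, f32, f14, f41, f24, f42, f34, f43, if_true, if_false, eq_self_iff_true, mul_zero, zero_mul, add_zero, zero_add, mul_one, one_mul, not_true, not_false_iff]; try ring
             · by_cases e4 : m = n + 2
               · subst e4; simp only [sub_add_cancel, add_sub_cancel_right, eq_sub_iff_add_eq, sub_eq_iff_eq_add, left_eq_add, add_eq_left, right_eq_add, add_eq_right, add_right_inj, add_left_inj, nrm, nrm2, nrm3, nrm4, nrm5, f1, f2, f3, f4, f12, f21, f13, f31, f23, f32, f14, f41, f24, f42, f34, f43, if_true, if_false, eq_self_iff_true, mul_zero, zero_mul, add_zero, zero_add, mul_one, one_mul, not_true, not_false_iff]; try ring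
               · have d1 : ¬(n + 1 = m + 2) := fun h => e1 (by linear_combination h)
                 have d2 : ¬(m + 1 = n + 2) := fun h => e2 (by linear_combination h)
                 simp only [sub_add_cancel, add_sub_cancel_right, eq_sub_iff_add_eq, sub_eq_iff_eq_add, left_eq_add, add_eq_left, right_eq_add, add_eq_right, add_right_inj, add_left_inj, nrm, nrm2, nrm3, nrm4, nrm5, f1, f2, f3, f4, f12, f21, f13, f31, f23, f32, f14, f41, f24, f42, f34, f43, if_true, if_false, eq_self_iff_true, mul_zero, zero_mul, add_zero, zero_add, mul_one, one_mul, not_true, not_false_iff, e0, e1, e2, e3, e4, Ne.symm e0, Ne.symm e1, Ne.symm e2, Ne.symm e3, Ne.symm e4, d1, d2, Ne.symm d1, Ne.symm d2]; try ring)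
  · intro x i j
    refine ((collapse (JMT23 ε) x _ _ _ _ _ _ _ _ _ _
      (fun k => dM1 ε x i k) (fun l => dM1 ε x j l)).trans ?_)
    rcases i with m | m <;> rcases j with n | n <;>
      simp only [m1s1, m1s2, m1a1, m1a2, JMT23, JT2, JT3, miuraMT1, c1, c2] <;>
      (by_cases e0 : n = m
       · subst e0; simp only [sub_add_cancel, add_sub_cancel_right, eq_sub_iff_add_eq, sub_eq_iff_eq_add, left_eq_add, add_eq_left, right_eq_add, add_eq_right, add_right_inj, add_left_inj, nrm, nrm2, nrm3, nrm4, nrm5, f1, f2, f3, f4, f12, f21, f13, f31, f23, f32, f14, f41, f24, f42, f34, f43, if_true, if_false, eq_self_iff_true, mul_zero, zero_mul, add_zero, zero_add, mul_one, one_mul, not_true, not_false_iff]; try ring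
       · by_cases e1 : n = m + 1
         · subst e1; simp only [sub_add_cancel, add_sub_cancel_right, eq_sub_iff_add_eq, sub_eq_iff_eq_add, left_eq_add, add_eq_left, right_eq_add, add_eq_right, add_right_inj, add_left_inj, nrm, nrm2, nrm3, nrm4, nrm5, f1, f2, f3, f4, f12, f21, f13, f31, f23, f32, f14, f41, f24, f42, f34, f43, if_true, if_false, eq_self_iff_true, mul_zero, zero_mul, add_zero, zero_add, mul_one, one_mul, not_true, not_false_iff]; try ring
         · by_cases e2 : m = n + 1
           · subst e2; simp only [sub_add_cancel, add_sub_cancel_right, eq_sub_iff_add_eq, sub_eq_iff_eq_add, left_eq_add, add_eq_left, right_eq_add, add_eq_right, add_right_inj, add_left_inj, nrm, nrm2, nrm3, nrm4, nrm5, f1, f2, f3, f4, f12, f21, f13, f31, f23, f32, f14, f41, f24, f42, f34, f43, if_true, if_false, eq_self_iff_true, mul_zero, zero_mul, add_zero, zero_add, mul_one, one_mul, not_true, not_false_iff]; try ring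
           · by_cases e3 : n = m + 2
             · subst e3; simp only [sub_add_cancel, add_sub_cancel_right, eq_sub_iff_add_eq, sub_eq_iff_eq_add, left_eq_add, add_eq_left, right_eq_add, add_eq_right, add_right_inj, add_left_inj, nrm, nrm2, nrm3, nrm4, nrm5, f1, f2, f3, f4, f12, f21, f13, f31, f23, f32, f14, f41, f24, f42, f34, f43, if_true, if_false, eq_self_iff_true, mul_zero, zero_mul, add_zero, zero_add, mul_one, one_mul, not_true, not_false_iff]; try ring
             · by_cases e4 : m = n + 2
               · subst e4; simp only [sub_add_cancel, add_sub_cancel_right, eq_sub_iff_add_eq, sub_eq_iff_eq_add, left_eq_add, add_eq_left, right_eq_add, add_eq_right, add_right_inj, add_left_inj, nrm, nrm2, nrm3, nrm4, nrm5, f1, f2, f3, f4, f12, f21, f13, f31, f23, f32, f14, f41, f24, f42, f34, f43, if_true, if_false, eq_self_iff_true, mul_zero, zero_mul, add_zero, zero_add, mul_one, one_mul, not_true, not_false_iff]; try ring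
               · have d1 : ¬(n + 1 = m + 2) := fun h => e1 (by linear_combination h)
                 have d2 : ¬(m + 1 = n + 2) := fun h => e2 (by linear_combination h)
                 simp only [sub_add_cancel, add_sub_cancel_right, eq_sub_iff_add_eq, sub_eq_iff_eq_add, left_eq_add, add_eq_left, right_eq_add, add_eq_right, add_right_inj, add_left_inj, nrm, nrm2, nrm3, nrm4, nrm5, f1, f2, f3, f4, f12, f21, f13, f31, f23, f32, f14, f41, f24, f42, f34, f43, if_true, if_false, eq_self_iff_true, mul_zero, zero_mul, add_zero, zero_add, mul_one, one_mul, not_true, not_false_iff, e0, e1, e2, e3, e4, Ne.symm e0, Ne.symm e1, Ne.symm e2, Ne.symm e3, Ne.symm e4, d1, d2, Ne.symm d1, Ne.symm d2]; try ring)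
  · intro x i j
    refine ((collapse (JMT23 ε) x _ _ _ _ _ _ _ _ _ _
      (fun k => dM2 ε x i k) (fun l => dM2 ε x j l)).trans ?_)
    rcases i with m | m <;> rcases j with n | n <;>
      simp only [m2s1, m2s2, m2a1, m2a2, JMT23, JT2, JT3, miuraMT2, c1, c2] <;>
      (by_cases e0 : n = m
       · subst e0; simp only [sub_add_cancel, add_sub_cancel_right, eq_sub_iff_add_eq, sub_eq_iff_eq_add, left_eq_add, add_eq_left, right_eq_add, add_eq_right, add_right_inj, add_left_inj, nrm, nrm2, nrm3, nrm4, nrm5, f1, f2, f3, f4, f12, f21, f13, f31, f23, f32, f14, f41, f24, f42, f34, f43, if_true, if_false, eq_self_iff_true, mul_zero, zero_mul, add_zero, zero_add, mul_one, one_mul, not_true, not_false_iff]; try ring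
       · by_cases e1 : n = m + 1
         · subst e1; simp only [sub_add_cancel, add_sub_cancel_right, eq_sub_iff_add_eq, sub_eq_iff_eq_add, left_eq_add, add_eq_left, right_eq_add, add_eq_right, add_right_inj, add_left_inj, nrm, nrm2, nrm3, nrm4, nrm5, f1, f2, f3, f4, f12, f21, f13, f31, f23, f32, f14, f41, f24, f42, f34, f43, if_true, if_false, eq_self_iff_true, mul_zero, zero_mul, add_zero, zero_add, mul_one, one_mul, not_true, not_false_iff]; try ring
         · by_cases e2 : m = n + 1
           · subst e2; simp only [sub_add_cancel, add_sub_cancel_right, eq_sub_iff_add_eq, sub_eq_iff_eq_add, left_eq_add, add_eq_left, right_eq_add, add_eq_right, add_right_inj, add_left_inj, nrm, nrm2, nrm3, nrm4, nrm5, f1, f2, f3, f4, f12, f21, f13, f31, f23, f32, f14, f41, f24, f42, f34, f43, if_true, if_false, eq_self_iff_true, mul_zero, zero_mul, add_zero, zero_add, mul_one, one_mul, not_true, not_false_iff]; try ring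
           · by_cases e3 : n = m + 2
             · subst e3; simp only [sub_add_cancel, add_sub_cancel_right, eq_sub_iff_add_eq, sub_eq_iff_eq_add, left_eq_add, add_eq_left, right_eq_add, add_eq_right, add_right_inj, add_left_inj, nrm, nrm2, nrm3, nrm4, nrm5, f1, f2, f3, f4, f12, f21, f13, f31, f23, f32, f14, f41, f24, f42, f34, f43, if_true, if_false, eq_self_iff_true, mul_zero, zero_mul, add_zero, zero_add, mul_one, one_mul, not_true, not_false_iff]; try ring
             · by_cases e4 : m = n + 2
               · subst e4; simp only [sub_add_cancel, add_sub_cancel_right, eq_sub_iff_add_eq, sub_eq_iff_eq_add, left_eq_add, add_eq_left, right_eq_add, add_eq_right, add_right_inj, add_left_inj, nrm, nrm2, nrm3, nrm4, nrm5, f1, f2, f3, f4, f12, f21, f13, f31, f23, f32, f14, f41, f24, f42, f34, f43, if_true, if_false, eq_self_iff_true, mul_zero, zero_mul, add_zero, zero_add, mul_one, one_mul, not_true, not_false_iff]; try ring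
               · have d1 : ¬(n + 1 = m + 2) := fun h => e1 (by linear_combination h)
                 have d2 : ¬(m + 1 = n + 2) := fun h => e2 (by linear_combination h)
                 simp only [sub_add_cancel, add_sub_cancel_right, eq_sub_iff_add_eq, sub_eq_iff_eq_add, left_eq_add, add_eq_left, right_eq_add, add_eq_right, add_right_inj, add_left_inj, nrm, nrm2, nrm3, nrm4, nrm5, f1, f2, f3, f4, f12, f21, f13, f31, f23, f32, f14, f41, f24, f42, f34, f43, if_true, if_false, eq_self_iff_true, mul_zero, zero_mul, add_zero, zero_add, mul_one, one_mul, not_true, not_false_iff, e0, e1, e2, e3, e4, Ne.symm e0, Ne.symm e1, Ne.symm e2, Ne.symm e3, Ne.symm e4, d1, d2, Ne.symm d1, Ne.symm d2]; try ring)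
end

section
/- For all ε, δ ∈ ℝ and all i, j ∈ {1,2}, the following diagram of Miura maps commutes: M_i(δ) ∘ M_j(δ;ε) = M_j(ε) ∘ M_i(ε;δ) as maps from ℳ²𝒯 to 𝒯. In particular, the composition M_1(ε) ∘ M_1(ε;δ) : ℳ²𝒯 → 𝒯 is given explicitly by b_k = r_k + (ε+δ)s_{k−1} + εδ·s_{k−1}(r_{k−1} + r_k) and a_k = s_k(1 + εr_k)(1 + δr_k)(1 + εδs_{k−1}), and is symmetric in ε and δ. -/
open scoped BigOperators

/-- Miura map `M₁(ε;δ) : ℳ²𝒯 → ℳ𝒯`: `p_k = r_k + δs_{k-1}(1+εr_k)`, `q_k = s_k(1+δr_k)`. -/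
noncomputable def miuraM2T1 (ε δ : ℝ) {N : ℕ} (x : Phase N) : Phase N := fun i =>
  match i with
  | Sum.inl k => c1 x k + δ * c2 x (k - 1) * (1 + ε * c1 x k)
  | Sum.inr k => c2 x k * (1 + δ * c1 x k)

/-- Miura map `M₂(ε;δ) : ℳ²𝒯 → ℳ𝒯`: `p_k = r_k + δs_k(1+εr_k)`, `q_k = s_k(1+δr_{k+1})`. -/
noncomputable def miuraM2T2 (ε δ : ℝ) {N : ℕ} (x : Phase N) : Phase N := fun i =>
  match i with
  | Sum.inl k => c1 x k + δ * c2 x k * (1 + ε * c1 x k)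
  | Sum.inr k => c2 x k * (1 + δ * c1 x (k + 1))

/-- permutability `M_i(δ) ∘ M_j(δ;ε) = M_j(ε) ∘ M_i(ε;δ)` of
the Miura maps, the explicit formula for `M₁(ε) ∘ M₁(ε;δ)`, and its symmetry
in `ε` and `δ`. -/
theorem stmt10 (N : ℕ) [NeZero N] (hN : 5 ≤ N) (ε δ : ℝ) :
    (∀ x : Phase N, miuraMT1 δ (miuraM2T1 δ ε x) = miuraMT1 ε (miuraM2T1 ε δ x)) ∧
    (∀ x : Phase N, miuraMT1 δ (miuraM2T2 δ ε x) = miuraMT2 ε (miuraM2T1 ε δ x)) ∧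
    (∀ x : Phase N, miuraMT2 δ (miuraM2T1 δ ε x) = miuraMT1 ε (miuraM2T2 ε δ x)) ∧
    (∀ x : Phase N, miuraMT2 δ (miuraM2T2 δ ε x) = miuraMT2 ε (miuraM2T2 ε δ x)) ∧
    (∀ x : Phase N, ∀ k : ZMod N,
      miuraMT1 ε (miuraM2T1 ε δ x) (Sum.inl k)
        = c1 x k + (ε + δ) * c2 x (k - 1)
          + ε * δ * c2 x (k - 1) * (c1 x (k - 1) + c1 x k) ∧
      miuraMT1 ε (miuraM2T1 ε δ x) (Sum.inr k)
        = c2 x k * (1 + ε * c1 x k) * (1 + δ * c1 x k)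
          * (1 + ε * δ * c2 x (k - 1))) ∧
    (∀ x : Phase N, miuraMT1 ε (miuraM2T1 ε δ x) = miuraMT1 δ (miuraM2T1 δ ε x)) := by
  refine ⟨?_, ?_, ?_, ?_, ?_, ?_⟩
  · intro x; funext i; cases i <;>
      simp only [miuraMT1, miuraM2T1, c1, c2, add_sub_cancel_right, sub_add_cancel] <;> ring
  · intro x; funext i; cases i <;>
      simp only [miuraMT1, miuraMT2, miuraM2T1, miuraM2T2, c1, c2,
        add_sub_cancel_right, sub_add_cancel] <;> ring
  · intro x; funext i; cases i <;>
      simp only [miuraMT1, miuraMT2, miuraM2T1, miuraM2T2, c1, c2,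
        add_sub_cancel_right, sub_add_cancel] <;> ring
  · intro x; funext i; cases i <;>
      simp only [miuraMT2, miuraM2T2, c1, c2, add_sub_cancel_right, sub_add_cancel] <;> ring
  · intro x k
    constructor <;>
      simp only [miuraMT1, miuraM2T1, c1, c2, add_sub_cancel_right, sub_add_cancel] <;> ring
  · intro x; funext i; cases i <;>
      simp only [miuraMT1, miuraM2T1, c1, c2, add_sub_cancel_right, sub_add_cancel] <;> ring
end

section
/- For every ε ∈ ℝ and all i, j ∈ {1,2}, the following diagram of Miura maps commutes: M_i(ε) ∘ M_j(ε) = M_j ∘ 𝐌_i(ε) as maps from ℳ𝒱 to 𝒯, where M_j(ε) : ℳ𝒱 → ℳ𝒯, M_i(ε) : ℳ𝒯 → 𝒯, 𝐌_i(ε) : ℳ𝒱 → 𝒱 and M_j : 𝒱 → 𝒯. -/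
open scoped BigOperators

/-- Miura map `M₁ : 𝒱 → 𝒯`: `b_k = u_k + v_{k-1}`, `a_k = u_k v_k`. -/
noncomputable def miuraV1 {N : ℕ} (x : Phase N) : Phase N := fun i =>
  match i with
  | Sum.inl k => c1 x k + c2 x (k - 1)
  | Sum.inr k => c1 x k * c2 x k

/-- Miura map `M₂ : 𝒱 → 𝒯`: `b_k = u_k + v_k`, `a_k = u_{k+1} v_k`. -/
noncomputable def miuraV2 {N : ℕ} (x : Phase N) : Phase N := fun i =>
  match i with
  | Sum.inl k => c1 x k + c2 x k
  | Sum.inr k => c1 x (k + 1) * c2 x k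

/-- Miura map `𝐌₁(ε) : ℳ𝒱 → 𝒱`: `u_k = y_k(1+εz_{k-1})`, `v_k = z_k(1+εy_k)`. -/
noncomputable def bMV1 (ε : ℝ) {N : ℕ} (x : Phase N) : Phase N := fun i =>
  match i with
  | Sum.inl k => c1 x k * (1 + ε * c2 x (k - 1))
  | Sum.inr k => c2 x k * (1 + ε * c1 x k)

/-- Miura map `𝐌₂(ε) : ℳ𝒱 → 𝒱`: `u_k = y_k(1+εz_k)`, `v_k = z_k(1+εy_{k+1})`. -/
noncomputable def bMV2 (ε : ℝ) {N : ℕ} (x : Phase N) : Phase N := fun i =>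
  match i with
  | Sum.inl k => c1 x k * (1 + ε * c2 x k)
  | Sum.inr k => c2 x k * (1 + ε * c1 x (k + 1))

/-- Miura map `M₁(ε) : ℳ𝒱 → ℳ𝒯`: `p_k = y_k + z_{k-1} + εy_k z_{k-1}`, `q_k = y_k z_k`. -/
noncomputable def mMV1 (ε : ℝ) {N : ℕ} (x : Phase N) : Phase N := fun i =>
  match i with
  | Sum.inl k => c1 x k + c2 x (k - 1) + ε * c1 x k * c2 x (k - 1)
  | Sum.inr k => c1 x k * c2 x k

/-- Miura map `M₂(ε) : ℳ𝒱 → ℳ𝒯`: `p_k = y_k + z_k + εy_k z_k`, `q_k = y_{k+1} z_k`. -/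
noncomputable def mMV2 (ε : ℝ) {N : ℕ} (x : Phase N) : Phase N := fun i =>
  match i with
  | Sum.inl k => c1 x k + c2 x k + ε * c1 x k * c2 x k
  | Sum.inr k => c1 x (k + 1) * c2 x k

/-- permutability of the Miura maps:
`M_i(ε) ∘ M_j(ε) = M_j ∘ 𝐌_i(ε)` as maps `ℳ𝒱 → 𝒯`, for `i, j ∈ {1,2}`. -/
theorem stmt15 (N : ℕ) [NeZero N] (hN : 5 ≤ N) (ε : ℝ) :
    (∀ x : Phase N, miuraMT1 ε (mMV1 ε x) = miuraV1 (bMV1 ε x)) ∧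
    (∀ x : Phase N, miuraMT1 ε (mMV2 ε x) = miuraV2 (bMV1 ε x)) ∧
    (∀ x : Phase N, miuraMT2 ε (mMV1 ε x) = miuraV1 (bMV2 ε x)) ∧
    (∀ x : Phase N, miuraMT2 ε (mMV2 ε x) = miuraV2 (bMV2 ε x)) := by
  refine ⟨?_, ?_, ?_, ?_⟩ <;> intro x <;> funext i <;> rcases i with k | k <;>
    simp only [miuraMT1, miuraMT2, miuraV1, miuraV2, bMV1, bMV2, mMV1, mMV2, c1, c2,
      sub_add_cancel, add_sub_cancel_right] <;> ring
end
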